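/- Let $\{Y^n_t\}$ be the continuous version of an $s$-stage Runge–Kutta method with stage values $Y^n_{t,i}$, driven by a $\beta$-Hölder path $X$ with $\beta\in(1/2,1)$ and coefficients $V\in\mathcal{C}^1_b(\mathbb{R}^m;\mathbb{R}^{m\times d})$. Then for all $n$: $\sum_{i=1}^{s}\|Y^n_{\cdot,i}\|_\beta\le C\max\{\|X\|_\beta,\|X\|_\beta^{1/\beta}\}$ and $\|Y^n_\cdot\|_\beta\le C\max\{\|X\|_\beta,\|X\|_\beta^{1/\beta+1}\}$, where $C$ depends only on $\max\{|a_{ij}|,|b_i|\}$, $s$, $V$, $\beta$, $T$ and not on $n$. -/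

import Mathlib

/-!
On the grid `t_k = k h` the numerical solution satisfies
`Y_{t_{k+1}} - Y_{t_k} = L_k (X_{t_{k+1}} - X_{t_k})` with `L_k = ∑ b_i V(Y_{t_{k+1},i})`. These
coefficients are bounded by a constant `c`, and since every stage value lies within `c K h^β` of
`Y_{t_k}`, they depend `c`-Lipschitz on the solution up to an error `O(K h^β)`. A sewing argument
on dyadic blocks then shows that the remainder `Y_{t_{k+N}} - Y_{t_k} - L_k (X_{t_{k+N}} - X_{t_k})`
is `O((K (N h)^β)²)` as long as `c K (N h)^β` stays below a threshold `θ`; closing the doubling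
step needs `2 + 2θ ≤ 2^{2β}`, which is where `β > 1/2` enters. Hence `Y` is `β`-Hölder with
constant `O(K)` on such blocks. Longer stretches are cut into blocks of the maximal admissible
length `p`; as `(p h)^{β-1} = O(K^{(1-β)/β})`, their number contributes the `K^{1/β}` term.
Inside a cell, `Y` and the stage values are bounded linear images of increments of `X` (and, for
the stage values, of `Y` one step back), so the grid bound extends to all times.
-/

/-- The `β`-Hölder seminorm of `f` on `[s,t]`. -/
noncomputable def holderSemi {E : Type*} [NormedAddCommGroup E]
    (f : ℝ → E) (s t β : ℝ) : ℝ :=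
  sSup {c | ∃ u v, s ≤ u ∧ u < v ∧ v ≤ t ∧ c = ‖f v - f u‖ / (v - u) ^ β}

open Real

theorem holderSemi_le {E : Type*} [NormedAddCommGroup E] {f : ℝ → E} {s t β H : ℝ}
    (hH : 0 ≤ H) (h : ∀ u v, s ≤ u → u < v → v ≤ t → ‖f v - f u‖ ≤ H * (v - u) ^ β) :
    holderSemi f s t β ≤ H := by
  refine Real.sSup_le ?_ hH
  rintro _ ⟨u, v, hu, huv, hv, rfl⟩
  rw [div_le_iff₀ (rpow_pos_of_pos (sub_pos.2 huv) β)]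
  exact h u v hu huv hv

theorem norm_sub_le_mul_rpow_of_lt {E : Type*} [NormedAddCommGroup E] {X : ℝ → E} {K β T : ℝ}
    (hβ : β ≠ 0) (hX : ∀ u v, 0 ≤ u → u < v → v ≤ T → ‖X v - X u‖ ≤ K * (v - u) ^ β)
    (u v : ℝ) (hu : 0 ≤ u) (huv : u ≤ v) (hv : v ≤ T) : ‖X v - X u‖ ≤ K * (v - u) ^ β := by
  rcases huv.eq_or_lt with rfl | hlt
  · simp [zero_rpow hβ]
  · exact hX u v hu hlt hv

theorem exists_sewing_threshold {β : ℝ} (hβ : 1 / 2 < β) :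
    ∃ θ : ℝ, 0 < θ ∧ 2 + 2 * θ ≤ 2 ^ (2 * β) := by
  have : (2 : ℝ) ^ (1 : ℝ) < 2 ^ (2 * β) := rpow_lt_rpow_of_exponent_lt one_lt_two (by linarith)
  rw [rpow_one] at this
  exact ⟨(2 ^ (2 * β) - 2) / 2, by linarith, by linarith⟩

theorem one_sub_two_rpow_neg_pos {β : ℝ} (hβ : 0 < β) : 0 < 1 - (2 : ℝ) ^ (-β) := by
  have : (2 : ℝ) ^ (-β) < 1 := rpow_lt_one_of_one_lt_of_neg one_lt_two (by linarith)
  linarith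

theorem le_rpow_mul_rpow_one_sub {s T β : ℝ} (hs : 0 ≤ s) (hsT : s ≤ T) (hβ : β ≤ 1) :
    s ≤ s ^ β * T ^ (1 - β) := by
  rcases hs.eq_or_lt with rfl | hs
  · exact mul_nonneg (rpow_nonneg le_rfl _) (rpow_nonneg hsT _)
  calc s = s ^ β * s ^ (1 - β) := by rw [← rpow_add hs, add_sub_cancel, rpow_one]
    _ ≤ s ^ β * T ^ (1 - β) := by gcongr

theorem mul_rpow_sub_one_le_of_lt {β θ c κ q : ℝ} (hβ0 : 0 < β) (hβ1 : β ≤ 1) (hθ : 0 < θ)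
    (hc : 0 < c) (hκ : 0 < κ) (hq : 0 < q) (hlt : θ < c * κ * q ^ β) :
    κ * q ^ (β - 1) ≤ (c / θ) ^ ((1 - β) / β) * κ ^ (1 / β) := by
  have hcκ : 0 < c * κ := mul_pos hc hκ
  have hthr : θ / (c * κ) < q ^ β := by rw [div_lt_iff₀ hcκ]; linarith
  have hsplit : q ^ (β - 1) = (q ^ β) ^ (-((1 - β) / β)) := by
    rw [← rpow_mul hq.le]; congr 1; field_simp; ring
  calc κ * q ^ (β - 1) = κ * (q ^ β) ^ (-((1 - β) / β)) := by rw [hsplit]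
    _ ≤ κ * (θ / (c * κ)) ^ (-((1 - β) / β)) := by
        refine mul_le_mul_of_nonneg_left (rpow_le_rpow_of_nonpos (by positivity) hthr.le ?_) hκ.le
        exact neg_nonpos.2 (div_nonneg (by linarith) hβ0.le)
    _ = (c / θ) ^ ((1 - β) / β) * κ ^ (1 / β) := by
        rw [rpow_neg (by positivity), ← inv_rpow (by positivity), inv_div,
          mul_div_right_comm, mul_rpow (by positivity) hκ.le, mul_left_comm,
          ← rpow_one_add' hκ.le (by positivity)]
        congr 2
        field_simp
        ring

/-- Single steps are admissible blocks even above the threshold. -/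
theorem exists_block_size {c κ β θ : ℝ} (hcκ : 0 ≤ c * κ) (hβ0 : 0 < β) (hβ1 : β ≤ 1)
    (hθ : 0 ≤ θ) {N : ℕ} (hN : θ < c * (κ * (N : ℝ) ^ β)) :
    ∃ p : ℕ, 1 ≤ p ∧ p ≤ N ∧ (p ≤ 1 ∨ c * (κ * (p : ℝ) ^ β) ≤ θ) ∧
      θ / 2 < c * κ * (p : ℝ) ^ β := by
  classical
  have hN1 : 1 ≤ N := by
    by_contra! h0
    simp [Nat.lt_one_iff.1 h0, zero_rpow hβ0.ne'] at hN
    linarith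
  set P : ℕ → Prop := fun j => j ≤ 1 ∨ c * (κ * (j : ℝ) ^ β) ≤ θ
  set p := Nat.findGreatest P N
  have hp1 : 1 ≤ p := Nat.le_findGreatest hN1 (Or.inl le_rfl)
  refine ⟨p, hp1, Nat.findGreatest_le N, Nat.findGreatest_spec (P := P) hN1 (Or.inl le_rfl), ?_⟩
  have hnext : θ < c * κ * ((p : ℝ) + 1) ^ β := by
    rcases (Nat.findGreatest_le N : p ≤ N).lt_or_eq with hlt | heq
    · have := Nat.findGreatest_is_greatest (P := P) (lt_add_one p) hlt
      simp only [P, not_or, not_le] at this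
      push_cast at this
      linarith [this.2]
    · calc θ < c * (κ * (N : ℝ) ^ β) := hN
        _ ≤ c * κ * ((p : ℝ) + 1) ^ β := by
          rw [← mul_assoc, ← heq]; gcongr; linarith
  have hp : (0 : ℝ) ≤ p := p.cast_nonneg
  calc θ / 2 < c * κ * ((p : ℝ) + 1) ^ β / 2 := by linarith
    _ ≤ c * κ * (2 * (p : ℝ)) ^ β / 2 := by
        gcongr; exact_mod_cast (by omega : p + 1 ≤ 2 * p)
    _ ≤ c * κ * (p : ℝ) ^ β := by
        rw [mul_rpow zero_le_two hp, div_le_iff₀ two_pos, mul_left_comm, mul_comm _ 2]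
        gcongr
        calc (2 : ℝ) ^ β ≤ 2 ^ (1 : ℝ) := rpow_le_rpow_of_exponent_le one_le_two hβ1
          _ = 2 := rpow_one 2

theorem max_rpow_one_div_le {K β : ℝ} (hK : 0 ≤ K) (hβ0 : 0 < β) (hβ1 : β ≤ 1) :
    max K (K ^ (1 / β)) ≤ max K (K ^ (1 / β + 1)) := by
  have hβ : 1 ≤ 1 / β := by rw [le_div_iff₀ hβ0]; linarith
  refine max_le (le_max_left _ _) ?_
  rcases le_total K 1 with h | h
  · exact (rpow_le_rpow_of_exponent_ge' hK h zero_le_one hβ).trans_eq (rpow_one K) |>.trans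
      (le_max_left _ _)
  · exact (rpow_le_rpow_of_exponent_le h (by linarith)).trans (le_max_right _ _)

section Chaining

variable {E : Type*} [NormedAddCommGroup E]

/-- Split off the largest dyadic block `2 ^ ⌊log₂ N⌋ ≥ N / 2`; the constant solves
`A' = A + 2 ^ (-β) A'`. -/
theorem norm_sub_le_of_two_pow {g : ℕ → E} {n N₀ : ℕ} {A β : ℝ} (hA : 0 ≤ A) (hβ : 0 < β)
    (h : ∀ m k : ℕ, k + 2 ^ m ≤ n → 2 ^ m ≤ N₀ → ‖g (k + 2 ^ m) - g k‖ ≤ A * ((2 ^ m : ℕ) : ℝ) ^ β)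
    {N : ℕ} (hN : N ≤ N₀) {k : ℕ} (hk : k + N ≤ n) :
    ‖g (k + N) - g k‖ ≤ A / (1 - 2 ^ (-β)) * (N : ℝ) ^ β := by
  have hq := one_sub_two_rpow_neg_pos hβ
  set A' := A / (1 - 2 ^ (-β))
  have hA' : A + A' * 2 ^ (-β) = A' := by
    simp only [A']; field_simp; ring
  induction N using Nat.strong_induction_on generalizing k with
  | _ N ih =>
  rcases N.eq_zero_or_pos with rfl | hN0
  · simp [zero_rpow hβ.ne']
  set P := 2 ^ Nat.log 2 N
  have hPN : P ≤ N := Nat.pow_log_le_self 2 hN0.ne'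
  have hNP : N < 2 * P := by
    have := Nat.lt_pow_succ_log_self one_lt_two N
    rwa [pow_succ'] at this
  have hrest := ih (N - P) (by omega) (by omega) (k := k + P) (by omega)
  rw [show k + P + (N - P) = k + N by omega] at hrest
  have hhalf : ((N - P : ℕ) : ℝ) ^ β ≤ (N : ℝ) ^ β * 2 ^ (-β) := by
    rw [rpow_neg zero_le_two, ← div_eq_mul_inv, ← div_rpow (Nat.cast_nonneg _) zero_le_two]
    gcongr
    rw [le_div_iff₀ two_pos]
    exact_mod_cast (by omega : (N - P) * 2 ≤ N)
  calc ‖g (k + N) - g k‖ ≤ ‖g (k + N) - g (k + P)‖ + ‖g (k + P) - g k‖ :=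
        norm_sub_le_norm_sub_add_norm_sub _ _ _
    _ ≤ A' * (N : ℝ) ^ β * 2 ^ (-β) + A * (N : ℝ) ^ β := by
        gcongr
        · calc _ ≤ A' * ((N - P : ℕ) : ℝ) ^ β := hrest
            _ ≤ _ := by rw [mul_assoc]; gcongr
        · calc _ ≤ A * ((P : ℕ) : ℝ) ^ β := h _ k (by omega) (by omega)
            _ ≤ _ := by gcongr
    _ = A' * (N : ℝ) ^ β := by linear_combination (N : ℝ) ^ β * hA'

theorem norm_sub_le_of_block {g : ℕ → E} {n p : ℕ} (hp : 0 < p) {Δ : ℝ}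
    (h : ∀ j N : ℕ, j + N ≤ n → N ≤ p → ‖g (j + N) - g j‖ ≤ Δ) {N k : ℕ} (hk : k + N ≤ n) :
    ‖g (k + N) - g k‖ ≤ ((N : ℝ) / p + 1) * Δ := by
  have hΔ : 0 ≤ Δ := (norm_nonneg _).trans (h 0 0 (by omega) (Nat.zero_le _))
  induction N using Nat.strong_induction_on generalizing k with
  | _ N ih =>
  by_cases hNp : N ≤ p
  · calc _ ≤ Δ := h k N hk hNp
      _ ≤ _ := le_mul_of_one_le_left hΔ (by linarith [show (0:ℝ) ≤ N / p by positivity])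
  have hrest := ih (N - p) (by omega) (k := k + p) (by omega)
  rw [show k + p + (N - p) = k + N by omega, Nat.cast_sub (by omega)] at hrest
  have hp' : (0 : ℝ) < p := by exact_mod_cast hp
  calc ‖g (k + N) - g k‖ ≤ ‖g (k + N) - g (k + p)‖ + ‖g (k + p) - g k‖ :=
        norm_sub_le_norm_sub_add_norm_sub _ _ _
    _ ≤ (((N : ℝ) - p) / p + 1) * Δ + Δ := add_le_add hrest (h k p (by omega) le_rfl)
    _ = ((N : ℝ) / p + 1) * Δ := by field_simp; ring

end Chaining

section YoungScheme

variable {E F : Type*} [NormedAddCommGroup E] [NormedSpace ℝ E] [NormedAddCommGroup F]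
  [NormedSpace ℝ F]

/-- For a Runge–Kutta method, `y k = Y_{t_k}` and `L k = ∑ b_i V(Y_{t_{k+1},i})`; the error
`2 c κ` in `norm_coeff_sub_le` comes from the stage values lying within `c κ` of `y k`. -/
structure DiscreteYoungScheme (x : ℕ → F) (y : ℕ → E) (L : ℕ → F →L[ℝ] E) (n : ℕ)
    (c κ β : ℝ) : Prop where
  norm_sub_le_rpow : ∀ k N : ℕ, k + N ≤ n → ‖x (k + N) - x k‖ ≤ κ * (N : ℝ) ^ β
  sub_eq : ∀ k < n, y (k + 1) - y k = L k (x (k + 1) - x k)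
  norm_le : ∀ k < n, ‖L k‖ ≤ c
  norm_coeff_sub_le : ∀ k < n, ∀ l < n, ‖L l - L k‖ ≤ c * (‖y l - y k‖ + 2 * c * κ)

def youngRemainder (x : ℕ → F) (y : ℕ → E) (L : ℕ → F →L[ℝ] E) (k N : ℕ) : E :=
  y (k + N) - y k - L k (x (k + N) - x k)

theorem youngRemainder_add (x : ℕ → F) (y : ℕ → E) (L : ℕ → F →L[ℝ] E) (k N M : ℕ) :
    youngRemainder x y L k (N + M) = youngRemainder x y L k N +
      youngRemainder x y L (k + N) M + (L (k + N) - L k) (x (k + N + M) - x (k + N)) := by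
  simp only [youngRemainder, sub_apply, ← add_assoc]
  have : L k (x (k + N + M) - x k) = L k (x (k + N + M) - x (k + N)) + L k (x (k + N) - x k) := by
    rw [← map_add, sub_add_sub_cancel]
  rw [this]
  abel

namespace DiscreteYoungScheme

variable {x : ℕ → F} {y : ℕ → E} {L : ℕ → F →L[ℝ] E} {n : ℕ} {c κ β θ : ℝ}

theorem norm_coeff_apply_le (h : DiscreteYoungScheme x y L n c κ β) {k N : ℕ} (hk : k + N ≤ n)
    (hk' : k < n) : ‖L k (x (k + N) - x k)‖ ≤ c * (κ * (N : ℝ) ^ β) :=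
  (L k).le_opNorm _ |>.trans (mul_le_mul (h.norm_le k hk') (h.norm_sub_le_rpow k N hk)
    (norm_nonneg _) ((norm_nonneg _).trans (h.norm_le k hk')))

/-- With `B = 3 c² / θ` and `γ = κ N ^ β`, the two halves and the cross term
`(L (k + N) - L k) (x (k + 2N) - x (k + N))` contribute at most
`2 B γ² + (c γ) B γ² + 3 c² γ² ≤ (2 + 2 θ) B γ²`, and `2 + 2 θ ≤ 2 ^ (2 β)` is the growth of
`B γ²` from `N` to `2 N`. -/
theorem norm_youngRemainder_add_self_le (h : DiscreteYoungScheme x y L n c κ β) (hc : 0 ≤ c)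
    (hκ : 0 ≤ κ) (hβ : 0 ≤ β) (hθ : 0 < θ) (h2θ : 2 + 2 * θ ≤ 2 ^ (2 * β)) {N : ℕ} (hN : 1 ≤ N)
    (hsmall : c * (κ * (N : ℝ) ^ β) ≤ θ)
    (hR : ∀ j, j + N ≤ n → ‖youngRemainder x y L j N‖ ≤ 3 * c ^ 2 / θ * (κ * (N : ℝ) ^ β) ^ 2)
    {k : ℕ} (hk : k + (N + N) ≤ n) :
    ‖youngRemainder x y L k (N + N)‖ ≤ 3 * c ^ 2 / θ * (κ * ((N + N : ℕ) : ℝ) ^ β) ^ 2 := by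
  set γ := κ * (N : ℝ) ^ β
  set B := 3 * c ^ 2 / θ
  have hB : 0 ≤ B := by positivity
  have hγ : 0 ≤ γ := by positivity
  have hκγ : κ ≤ γ := le_mul_of_one_le_right hκ (one_le_rpow (by exact_mod_cast hN) hβ)
  have hR₁ := hR k (by omega)
  have hR₂ := hR (k + N) (by omega)
  have hy : ‖y (k + N) - y k‖ ≤ B * γ ^ 2 + c * γ := by
    have : y (k + N) - y k = youngRemainder x y L k N + L k (x (k + N) - x k) := by
      simp [youngRemainder]
    rw [this]
    exact norm_add_le_of_le hR₁ (h.norm_coeff_apply_le (by omega) (by omega))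
  have hcross : ‖(L (k + N) - L k) (x (k + N + N) - x (k + N))‖ ≤
      c * (B * γ ^ 2 + 3 * c * γ) * γ := by
    refine (ContinuousLinearMap.le_opNorm _ _).trans
      (mul_le_mul ?_ ?_ (norm_nonneg _) (by positivity))
    · refine (h.norm_coeff_sub_le k (by omega) (k + N) (by omega)).trans ?_
      have := mul_le_mul_of_nonneg_left hκγ hc
      exact mul_le_mul_of_nonneg_left (by linarith) hc
    · exact h.norm_sub_le_rpow (k + N) N (by omega)
  have hdouble : (κ * ((N + N : ℕ) : ℝ) ^ β) ^ 2 = 2 ^ (2 * β) * γ ^ 2 := by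
    rw [Nat.cast_add, ← two_mul, mul_rpow zero_le_two (Nat.cast_nonneg _), mul_comm 2 β,
      rpow_mul zero_le_two, rpow_two]
    ring
  have hθB : 3 * c ^ 2 = θ * B := by simp only [B]; field_simp
  have hcγ : c * γ * (B * γ ^ 2) ≤ θ * (B * γ ^ 2) := by gcongr
  rw [youngRemainder_add, hdouble]
  calc _ ≤ B * γ ^ 2 + B * γ ^ 2 + c * (B * γ ^ 2 + 3 * c * γ) * γ :=
        norm_add₃_le.trans (add_le_add (add_le_add hR₁ hR₂) hcross)
    _ ≤ (2 + 2 * θ) * (B * γ ^ 2) := by nlinarith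
    _ = B * ((2 + 2 * θ) * γ ^ 2) := by ring
    _ ≤ B * (2 ^ (2 * β) * γ ^ 2) := by gcongr

theorem norm_youngRemainder_two_pow_le (h : DiscreteYoungScheme x y L n c κ β) (hc : 0 ≤ c)
    (hκ : 0 ≤ κ) (hβ : 0 ≤ β) (hθ : 0 < θ) (h2θ : 2 + 2 * θ ≤ 2 ^ (2 * β)) (m : ℕ) {k : ℕ}
    (hk : k + 2 ^ m ≤ n) (hsmall : c * (κ * ((2 ^ m : ℕ) : ℝ) ^ β) ≤ θ) :
    ‖youngRemainder x y L k (2 ^ m)‖ ≤ 3 * c ^ 2 / θ * (κ * ((2 ^ m : ℕ) : ℝ) ^ β) ^ 2 := by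
  induction m generalizing k with
  | zero =>
    have : youngRemainder x y L k 1 = 0 := by
      rw [youngRemainder, h.sub_eq k (by simpa using hk), sub_self]
    rw [pow_zero, this, norm_zero]
    positivity
  | succ m ih =>
    have hmono : c * (κ * ((2 ^ m : ℕ) : ℝ) ^ β) ≤ θ := by
      refine le_trans ?_ hsmall
      gcongr <;> omega
    rw [pow_succ, mul_two] at hk hsmall ⊢
    exact h.norm_youngRemainder_add_self_le hc hκ hβ hθ h2θ Nat.one_le_two_pow hmono
      (fun j hj => ih hj hmono) hk

theorem norm_sub_two_pow_le (h : DiscreteYoungScheme x y L n c κ β) (hc : 0 ≤ c)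
    (hκ : 0 ≤ κ) (hβ : 0 ≤ β) (hθ : 0 < θ) (h2θ : 2 + 2 * θ ≤ 2 ^ (2 * β)) (m : ℕ) {k : ℕ}
    (hk : k + 2 ^ m ≤ n) (hsmall : c * (κ * ((2 ^ m : ℕ) : ℝ) ^ β) ≤ θ) :
    ‖y (k + 2 ^ m) - y k‖ ≤ 4 * c * (κ * ((2 ^ m : ℕ) : ℝ) ^ β) := by
  set γ := κ * ((2 ^ m : ℕ) : ℝ) ^ β
  have hR := h.norm_youngRemainder_two_pow_le hc hκ hβ hθ h2θ m hk hsmall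
  have hR' : 3 * c ^ 2 / θ * γ ^ 2 ≤ 3 * c * γ := by
    rw [div_mul_eq_mul_div, div_le_iff₀ hθ]
    have : 0 ≤ c * γ := by positivity
    nlinarith
  have : y (k + 2 ^ m) - y k = youngRemainder x y L k (2 ^ m) + L k (x (k + 2 ^ m) - x k) := by
    simp [youngRemainder]
  have hk' : k < n := by have := Nat.one_le_two_pow (n := m); omega
  calc ‖y (k + 2 ^ m) - y k‖ ≤ 3 * c * γ + c * γ := by
        rw [this]; exact norm_add_le_of_le (hR.trans hR') (h.norm_coeff_apply_le hk hk')
    _ = 4 * c * γ := by ring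

theorem norm_sub_le_of_small (h : DiscreteYoungScheme x y L n c κ β) (hc : 0 ≤ c)
    (hκ : 0 ≤ κ) (hβ : 0 < β) (hθ : 0 < θ) (h2θ : 2 + 2 * θ ≤ 2 ^ (2 * β)) {N₀ : ℕ}
    (hN₀ : N₀ ≤ 1 ∨ c * (κ * (N₀ : ℝ) ^ β) ≤ θ) {N k : ℕ} (hN : N ≤ N₀) (hk : k + N ≤ n) :
    ‖y (k + N) - y k‖ ≤ 4 * c / (1 - 2 ^ (-β)) * (κ * (N : ℝ) ^ β) := by
  suffices ∀ m j, j + 2 ^ m ≤ n → 2 ^ m ≤ N₀ →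
      ‖y (j + 2 ^ m) - y j‖ ≤ 4 * c * κ * ((2 ^ m : ℕ) : ℝ) ^ β from
    (norm_sub_le_of_two_pow (by positivity) hβ this hN hk).trans_eq (by ring)
  intro m j hj hm
  rcases m.eq_zero_or_pos with rfl | hm0
  · simp only [pow_zero] at hj ⊢
    have := h.norm_coeff_apply_le hj (by omega)
    rw [← h.sub_eq j (by omega)] at this
    simp only [Nat.cast_one, one_rpow, mul_one] at this ⊢
    linarith [mul_nonneg hc hκ]
  refine (h.norm_sub_two_pow_le hc hκ hβ.le hθ h2θ m hj ?_).trans_eq (by ring)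
  refine le_trans ?_ (hN₀.resolve_left fun h1 => ?_)
  · gcongr
  · have := Nat.one_lt_two_pow hm0.ne'
    omega

/-- Chain blocks of the largest length `p` below the threshold; `θ / 2 < c κ p ^ β` bounds
their number `N / p` through `mul_rpow_sub_one_le_of_lt`. -/
theorem norm_sub_le_of_large (h : DiscreteYoungScheme x y L n c κ β) (hc : 0 < c)
    (hκ : 0 ≤ κ) (hβ0 : 0 < β) (hβ1 : β ≤ 1) (hθ : 0 < θ) (h2θ : 2 + 2 * θ ≤ 2 ^ (2 * β))
    {N k : ℕ} (hlarge : θ < c * (κ * (N : ℝ) ^ β)) (hk : k + N ≤ n) :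
    ‖y (k + N) - y k‖ ≤
      4 * c / (1 - 2 ^ (-β)) * (2 * (2 * c / θ) ^ ((1 - β) / β) * κ ^ (1 / β) * N) := by
  set A := 4 * c / (1 - 2 ^ (-β))
  have hA : 0 ≤ A := div_nonneg (by positivity) (one_sub_two_rpow_neg_pos hβ0).le
  obtain ⟨p, hp1, hpN, hpsmall, hpthr⟩ :=
    exists_block_size (mul_nonneg hc.le hκ) hβ0 hβ1 hθ.le hlarge
  have hκ0 : 0 < κ := hκ.lt_of_ne (by rintro rfl; simp at hpthr; linarith)
  have hp : (0 : ℝ) < p := by exact_mod_cast hp1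
  have hblock : ∀ j N', j + N' ≤ n → N' ≤ p → ‖y (j + N') - y j‖ ≤ A * (κ * (p : ℝ) ^ β) :=
    fun j N' hj hN' => (h.norm_sub_le_of_small hc.le hκ hβ0 hθ h2θ hpsmall hN' hj).trans
      (by gcongr)
  have hkey := mul_rpow_sub_one_le_of_lt hβ0 hβ1 (half_pos hθ) hc hκ0 hp hpthr
  rw [div_div_eq_mul_div, mul_comm c 2] at hkey
  have hNp : 1 ≤ (N : ℝ) / p := by
    rw [one_le_div hp]; exact_mod_cast hpN
  calc ‖y (k + N) - y k‖ ≤ ((N : ℝ) / p + 1) * (A * (κ * (p : ℝ) ^ β)) :=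
        norm_sub_le_of_block hp1 hblock hk
    _ ≤ 2 * A * N * (κ * (p : ℝ) ^ (β - 1)) := by
        rw [rpow_sub_one hp.ne']
        have : 0 ≤ A * (κ * (p : ℝ) ^ β) := by positivity
        calc _ ≤ (2 * ((N : ℝ) / p)) * (A * (κ * (p : ℝ) ^ β)) := by gcongr; linarith
          _ = _ := by field_simp
    _ ≤ 2 * A * N * ((2 * c / θ) ^ ((1 - β) / β) * κ ^ (1 / β)) := by gcongr
    _ = _ := by ring

theorem norm_sub_le (h : DiscreteYoungScheme x y L n c κ β) (hc : 0 < c) (hκ : 0 ≤ κ)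
    (hβ0 : 0 < β) (hβ1 : β ≤ 1) (hθ : 0 < θ) (h2θ : 2 + 2 * θ ≤ 2 ^ (2 * β)) {N k : ℕ}
    (hk : k + N ≤ n) :
    ‖y (k + N) - y k‖ ≤ 4 * c / (1 - 2 ^ (-β)) *
      (κ * (N : ℝ) ^ β + 2 * (2 * c / θ) ^ ((1 - β) / β) * κ ^ (1 / β) * N) := by
  have hA : 0 ≤ 4 * c / (1 - 2 ^ (-β)) :=
    div_nonneg (by positivity) (one_sub_two_rpow_neg_pos hβ0).le
  by_cases hsmall : c * (κ * (N : ℝ) ^ β) ≤ θ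
  · refine (h.norm_sub_le_of_small hc.le hκ hβ0 hθ h2θ (Or.inr hsmall) le_rfl hk).trans ?_
    gcongr
    exact le_add_of_nonneg_right (by positivity)
  · refine (h.norm_sub_le_of_large hc hκ hβ0 hβ1 hθ h2θ (not_le.1 hsmall) hk).trans ?_
    gcongr
    exact le_add_of_nonneg_left (by positivity)

end DiscreteYoungScheme

end YoungScheme

section UniformGrid

variable {E : Type*} [NormedAddCommGroup E] {τ β H : ℝ} {n : ℕ}

theorem exists_cell_mem (hτ : 0 < τ) (hn : 0 < n) {u : ℝ} (hu : 0 ≤ u) (hun : u ≤ n * τ) :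
    ∃ k < n, k * τ ≤ u ∧ u ≤ (k + 1) * τ := by
  have hfl : (⌊u / τ⌋₊ : ℝ) ≤ u / τ := Nat.floor_le (div_nonneg hu hτ.le)
  rcases lt_or_ge ⌊u / τ⌋₊ n with hlt | hge
  · refine ⟨⌊u / τ⌋₊, hlt, ?_, ?_⟩
    · rwa [le_div_iff₀ hτ] at hfl
    · rw [← div_le_iff₀ hτ]; exact (Nat.lt_floor_add_one _).le
  · refine ⟨n - 1, by omega, ?_, ?_⟩
    · have : ((n - 1 : ℕ) : ℝ) ≤ u / τ :=
        hfl.trans' (by exact_mod_cast (by omega : n - 1 ≤ ⌊u / τ⌋₊))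
      rwa [le_div_iff₀ hτ] at this
    · rwa [Nat.cast_sub hn, Nat.cast_one, sub_add_cancel]

theorem norm_sub_le_of_cell_of_grid {f : ℝ → E} (hτ : 0 < τ) (hβ : 0 ≤ β) (hH : 0 ≤ H)
    (hcell : ∀ k < n, ∀ u v : ℝ, k * τ ≤ u → u ≤ v → v ≤ (k + 1) * τ →
      ‖f v - f u‖ ≤ H * (v - u) ^ β)
    (hgrid : ∀ k l : ℕ, k ≤ l → l ≤ n → ‖f (l * τ) - f (k * τ)‖ ≤ H * (l * τ - k * τ) ^ β)
    {u v : ℝ} (hu : 0 ≤ u) (huv : u ≤ v) (hv : v ≤ n * τ) :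
    ‖f v - f u‖ ≤ 3 * H * (v - u) ^ β := by
  rcases huv.eq_or_lt with rfl | huv'
  · rw [sub_self, norm_zero]
    exact mul_nonneg (mul_nonneg (by norm_num) hH) (rpow_nonneg (sub_self u).ge _)
  have hn : 0 < n := by
    have : (0 : ℝ) < n := pos_of_mul_pos_left (hu.trans_lt (huv'.trans_le hv)) hτ.le
    exact_mod_cast this
  obtain ⟨k, hk, hku, hku'⟩ := exists_cell_mem hτ hn hu (huv.trans hv)
  obtain ⟨l, hl, hlv, hlv'⟩ := exists_cell_mem hτ hn (hu.trans huv) hv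
  by_cases hsame : v ≤ (k + 1) * τ
  · have : 0 ≤ H * (v - u) ^ β := mul_nonneg hH (rpow_nonneg (sub_nonneg.2 huv) _)
    linarith [hcell k hk u v hku huv hsame]
  have hkl : k + 1 ≤ l := by
    by_contra!
    have : (l : ℝ) + 1 ≤ k + 1 := by exact_mod_cast (by omega : l + 1 ≤ k + 1)
    nlinarith
  have hkl' : ((k : ℝ) + 1) * τ ≤ l * τ := by gcongr; exact_mod_cast hkl
  have hmono : ∀ a : ℝ, 0 ≤ a → a ≤ v - u → H * a ^ β ≤ H * (v - u) ^ β :=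
    fun a ha hab => by gcongr
  have h1 := hcell k hk u ((k + 1) * τ) hku (by linarith) le_rfl
  have h2 := hgrid (k + 1) l hkl hl.le
  have h3 := hcell l hl (l * τ) v le_rfl hlv hlv'
  push_cast at h2
  calc ‖f v - f u‖
        ≤ ‖f v - f (l * τ)‖ + ‖f (l * τ) - f ((k + 1) * τ)‖ + ‖f ((k + 1) * τ) - f u‖ := by
        have := norm_add₃_le (a := f v - f (l * τ)) (b := f (l * τ) - f ((k + 1) * τ))
          (c := f ((k + 1) * τ) - f u)
        simpa using this
    _ ≤ H * (v - u) ^ β + H * (v - u) ^ β + H * (v - u) ^ β := by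
        gcongr
        · exact h3.trans (hmono _ (by linarith) (by linarith))
        · exact h2.trans (hmono _ (by linarith) (by linarith))
        · exact h1.trans (hmono _ (by linarith) (by linarith))
    _ = 3 * H * (v - u) ^ β := by ring

end UniformGrid

section RungeKutta

variable {ι E F : Type*} [Fintype ι] [NormedAddCommGroup E] [NormedSpace ℝ E]
  [NormedAddCommGroup F] [NormedSpace ℝ F]

theorem norm_sum_smul_le {w : ι → ℝ} {v : ι → E} {M r : ℝ} (hw : ∀ j, |w j| ≤ M)
    (hv : ∀ j, ‖v j‖ ≤ r) : ‖∑ j, w j • v j‖ ≤ Fintype.card ι * M * r := by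
  calc ‖∑ j, w j • v j‖ ≤ ∑ _j : ι, M * r := norm_sum_le_of_le _ fun j _ => by
        rw [norm_smul, Real.norm_eq_abs]
        exact mul_le_mul (hw j) (hv j) (norm_nonneg _) ((abs_nonneg _).trans (hw j))
    _ = Fintype.card ι * M * r := by simp [mul_assoc]

def stageSum (w : ι → ℝ) (V : E → F →L[ℝ] E) (z : ι → E) : F →L[ℝ] E :=
  ∑ j, w j • V (z j)

variable {w : ι → ℝ} {V : E → F →L[ℝ] E} {M Cv c : ℝ}

@[simp]
theorem stageSum_apply (z : ι → E) (x : F) : stageSum w V z x = ∑ j, w j • V (z j) x := by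
  simp [stageSum]

theorem norm_stageSum_le (hw : ∀ j, |w j| ≤ M) (hV : ∀ e, ‖V e‖ ≤ Cv)
    (hc : Fintype.card ι * M * Cv ≤ c) (z : ι → E) : ‖stageSum w V z‖ ≤ c :=
  (norm_sum_smul_le hw fun j => hV (z j)).trans hc

theorem norm_stageSum_sub_le (hw : ∀ j, |w j| ≤ M) (hV : ∀ e e', ‖V e - V e'‖ ≤ Cv * ‖e - e'‖)
    (hCv : 0 ≤ Cv) (hc : Fintype.card ι * M * Cv ≤ c) {z z' : ι → E} {r : ℝ} (hr : 0 ≤ r)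
    (hz : ∀ j, ‖z j - z' j‖ ≤ r) : ‖stageSum w V z - stageSum w V z'‖ ≤ c * r := by
  rw [stageSum, stageSum, ← Finset.sum_sub_distrib]
  simp_rw [← smul_sub]
  calc _ ≤ Fintype.card ι * M * (Cv * r) :=
        norm_sum_smul_le hw fun j => (hV _ _).trans (by gcongr; exact hz j)
    _ ≤ c * r := by rw [← mul_assoc]; gcongr

structure StageSumBound (V : E → F →L[ℝ] E) (a : ι → ι → ℝ) (b : ι → ℝ) (c : ℝ) : Prop where
  norm_a_le : ∀ i z, ‖stageSum (a i) V z‖ ≤ c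
  norm_b_le : ∀ z, ‖stageSum b V z‖ ≤ c
  norm_b_sub_le : ∀ z z' : ι → E, ∀ r, 0 ≤ r → (∀ j, ‖z j - z' j‖ ≤ r) →
    ‖stageSum b V z - stageSum b V z'‖ ≤ c * r

theorem StageSumBound.nonneg {a : ι → ι → ℝ} {b : ι → ℝ} (hV : StageSumBound V a b c) :
    0 ≤ c :=
  (norm_nonneg _).trans (hV.norm_b_le 0)

theorem StageSumBound.of_abs_le {a : ι → ι → ℝ} {b : ι → ℝ} (hab : ∀ i j, |a i j| ≤ M ∧ |b i| ≤ M)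
    (hV : Differentiable ℝ V) (hVb : ∀ e, ‖V e‖ ≤ Cv ∧ ‖fderiv ℝ V e‖ ≤ Cv)
    (hc : Fintype.card ι * M * Cv ≤ c) : StageSumBound V a b c := by
  have hVlip : ∀ e e', ‖V e - V e'‖ ≤ Cv * ‖e - e'‖ := fun e e' =>
    convex_univ.norm_image_sub_le_of_norm_fderiv_le (fun w _ => hV w) (fun w _ => (hVb w).2)
      trivial trivial
  have hb : ∀ j, |b j| ≤ M := fun j => (hab j j).2
  exact ⟨fun i => norm_stageSum_le (fun j => (hab i j).1) (fun e => (hVb e).1) hc,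
    norm_stageSum_le hb (fun e => (hVb e).1) hc,
    fun _ _ _ hr hz => norm_stageSum_sub_le hb hVlip ((norm_nonneg _).trans (hVb 0).1) hc hr hz⟩

theorem max_sub_sub_max_sub_le (τ : ℝ) {u v : ℝ} (huv : u ≤ v) :
    max (v - τ) 0 - max (u - τ) 0 ≤ v - u := by
  have := abs_max_sub_max_le_abs (v - τ) (u - τ) 0
  rw [sub_sub_sub_cancel_right, abs_of_nonneg (sub_nonneg.2 huv)] at this
  exact (le_abs_self _).trans this

/-- The constant of `DiscreteYoungScheme.norm_sub_le`, with `κ ^ (1 / β) N` traded for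
`T ^ (1 - β) (N h) ^ β`, plus the in-cell constant `c`. -/
noncomputable def rkHolderConst (c β θ T : ℝ) : ℝ :=
  4 * c / (1 - 2 ^ (-β)) * (1 + 2 * (2 * c / θ) ^ ((1 - β) / β) * T ^ (1 - β)) + c

theorem le_rkHolderConst {c β θ T : ℝ} (hc : 0 ≤ c) (hβ : 0 < β) (hθ : 0 ≤ θ) (hT : 0 ≤ T) :
    c ≤ rkHolderConst c β θ T := by
  have := (one_sub_two_rpow_neg_pos hβ).le
  exact le_add_of_nonneg_left (by positivity)

/-- `Z u i` is the stage value `Y^n_{u,i}`, and `max (u - τ) 0` is the look-back point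
`(u - h) ∨ 0`. -/
structure IsRungeKuttaInterpolant (V : E → F →L[ℝ] E) (a : ι → ι → ℝ) (b : ι → ℝ) (n : ℕ)
    (τ : ℝ) (X : ℝ → F) (Y : ℝ → E) (Z : ℝ → ι → E) : Prop where
  update : ∀ k < n, ∀ u : ℝ, k * τ ≤ u → u ≤ (k + 1) * τ →
    Y u = Y (k * τ) + stageSum b V (Z ((k + 1) * τ)) (X u - X (k * τ))
  stage_zero : ∀ i, Z 0 i = Y 0
  stage : ∀ k < n, ∀ u : ℝ, k * τ < u → u ≤ (k + 1) * τ → ∀ i,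
    Z u i = Y (max (u - τ) 0) + stageSum (a i) V (Z (k * τ)) (X (k * τ) - X (max (u - τ) 0)) +
      stageSum (a i) V (Z ((k + 1) * τ)) (X u - X (k * τ))

namespace IsRungeKuttaInterpolant

variable {a : ι → ι → ℝ} {b : ι → ℝ} {n : ℕ} {τ K β θ : ℝ} {X : ℝ → F} {Y : ℝ → E}
  {Z : ℝ → ι → E}

theorem stage_succ (h : IsRungeKuttaInterpolant V a b n τ X Y Z) (hτ : 0 < τ) {k : ℕ}
    (hk : k < n) (i : ι) :
    Z ((k + 1) * τ) i = Y (k * τ) +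
      stageSum (a i) V (Z ((k + 1) * τ)) (X ((k + 1) * τ) - X (k * τ)) := by
  have hmax : max ((k + 1) * τ - τ) 0 = k * τ := by
    rw [add_mul, one_mul, add_sub_cancel_right, max_eq_left (by positivity)]
  rw [h.stage k hk _ (by linarith) le_rfl i, hmax, sub_self, map_zero, add_zero]

/-- At `u = t_k` this is the stage formula of the previous cell at its right end: the stage
values do not jump at grid points. -/
theorem stage_of_mem_Icc (h : IsRungeKuttaInterpolant V a b n τ X Y Z) (hτ : 0 < τ) {k : ℕ}
    (hk : k < n) {u : ℝ} (hku : k * τ ≤ u) (huk : u ≤ (k + 1) * τ) (i : ι) :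
    Z u i = Y (max (u - τ) 0) + stageSum (a i) V (Z (k * τ)) (X (k * τ) - X (max (u - τ) 0)) +
      stageSum (a i) V (Z ((k + 1) * τ)) (X u - X (k * τ)) := by
  rcases hku.lt_or_eq with hlt | rfl
  · exact h.stage k hk u hlt huk i
  rw [sub_self, map_zero, add_zero]
  rcases k with _ | j
  · simp [h.stage_zero, hτ.le]
  · have hmax : max ((j + 1 : ℕ) * τ - τ) 0 = j * τ := by
      push_cast
      rw [add_mul, one_mul, add_sub_cancel_right, max_eq_left (by positivity)]
    rw [hmax]
    push_cast
    exact h.stage_succ hτ (by omega) i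

theorem norm_stage_succ_sub_le (h : IsRungeKuttaInterpolant V a b n τ X Y Z) (hτ : 0 < τ)
    (hX : ∀ u v, 0 ≤ u → u ≤ v → v ≤ n * τ → ‖X v - X u‖ ≤ K * (v - u) ^ β)
    (hV : StageSumBound V a b c) {k : ℕ} (hk : k < n) (i : ι) :
    ‖Z ((k + 1) * τ) i - Y (k * τ)‖ ≤ c * (K * τ ^ β) := by
  have hk' : ((k : ℝ) + 1) * τ ≤ n * τ := by gcongr; exact_mod_cast hk
  rw [h.stage_succ hτ hk i, add_sub_cancel_left]
  refine ((stageSum _ V _).le_opNorm _).trans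
    (mul_le_mul (hV.norm_a_le i _) ?_ (norm_nonneg _) hV.nonneg)
  · simpa [add_mul] using hX (k * τ) ((k + 1) * τ) (by positivity) (by linarith) hk'

theorem discreteYoungScheme (h : IsRungeKuttaInterpolant V a b n τ X Y Z) (hτ : 0 < τ)
    (hK : 0 ≤ K) (hX : ∀ u v, 0 ≤ u → u ≤ v → v ≤ n * τ → ‖X v - X u‖ ≤ K * (v - u) ^ β)
    (hV : StageSumBound V a b c) :
    DiscreteYoungScheme (fun k : ℕ => X (k * τ)) (fun k : ℕ => Y (k * τ))
      (fun k : ℕ => stageSum b V (Z ((k + 1) * τ))) n c (K * τ ^ β) β where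
  norm_sub_le_rpow k N hkN := by
    have hkN' : ((k + N : ℕ) : ℝ) * τ ≤ n * τ := by gcongr
    calc _ ≤ K * ((k + N : ℕ) * τ - k * τ) ^ β := hX _ _ (by positivity) (by gcongr; omega) hkN'
      _ = K * τ ^ β * (N : ℝ) ^ β := by
        rw [Nat.cast_add, add_mul, add_sub_cancel_left, mul_rpow (Nat.cast_nonneg _) hτ.le]
        ring
  sub_eq k hk := by
    push_cast
    rw [h.update k hk _ (by linarith) le_rfl, add_sub_cancel_left]
  norm_le _ _ := hV.norm_b_le _
  norm_coeff_sub_le k hk l hl := by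
    refine hV.norm_b_sub_le _ _ _ (by have := hV.nonneg; positivity) fun i => ?_
    have hk' := h.norm_stage_succ_sub_le hτ hX hV hk i
    have hl' := h.norm_stage_succ_sub_le hτ hX hV hl i
    calc ‖Z ((l + 1) * τ) i - Z ((k + 1) * τ) i‖
        = ‖(Y (l * τ) - Y (k * τ)) + (Z ((l + 1) * τ) i - Y (l * τ)) -
            (Z ((k + 1) * τ) i - Y (k * τ))‖ := by congr 1; abel
      _ ≤ ‖Y (l * τ) - Y (k * τ)‖ + ‖Z ((l + 1) * τ) i - Y (l * τ)‖ +
          ‖Z ((k + 1) * τ) i - Y (k * τ)‖ := norm_sub_le_of_le (norm_add_le _ _) le_rfl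
      _ ≤ _ := by linarith

theorem norm_grid_sub_le (h : IsRungeKuttaInterpolant V a b n τ X Y Z) (hτ : 0 < τ)
    (hK : 0 ≤ K) (hX : ∀ u v, 0 ≤ u → u ≤ v → v ≤ n * τ → ‖X v - X u‖ ≤ K * (v - u) ^ β)
    (hV : StageSumBound V a b c) (hc : 0 < c) (hβ0 : 0 < β) (hβ1 : β ≤ 1) (hθ : 0 < θ)
    (h2θ : 2 + 2 * θ ≤ 2 ^ (2 * β)) {k l : ℕ} (hkl : k ≤ l) (hl : l ≤ n) :
    ‖Y (l * τ) - Y (k * τ)‖ ≤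
      rkHolderConst c β θ (n * τ) * max K (K ^ (1 / β)) * (l * τ - k * τ) ^ β := by
  obtain ⟨N, rfl⟩ := Nat.exists_eq_add_of_le hkl
  have hd := (h.discreteYoungScheme hτ hK hX hV).norm_sub_le hc (by positivity) hβ0 hβ1 hθ h2θ hl
  set s := (N : ℝ) * τ
  have hs : ((k + N : ℕ) : ℝ) * τ - k * τ = s := by push_cast; ring
  have h1 : K * τ ^ β * (N : ℝ) ^ β = K * s ^ β := by
    rw [mul_rpow (Nat.cast_nonneg _) hτ.le]; ring
  have h2 : (K * τ ^ β) ^ (1 / β) * N = K ^ (1 / β) * s := by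
    rw [mul_rpow hK (by positivity), one_div, rpow_rpow_inv hτ.le hβ0.ne']; ring
  have h3 : s ≤ s ^ β * (n * τ) ^ (1 - β) :=
    le_rpow_mul_rpow_one_sub (by positivity)
      (mul_le_mul_of_nonneg_right (by exact_mod_cast (by omega : N ≤ n)) hτ.le) hβ1
  set A := 4 * c / (1 - 2 ^ (-β))
  set D := 2 * (2 * c / θ) ^ ((1 - β) / β)
  set m := max K (K ^ (1 / β))
  have hA : 0 ≤ A := div_nonneg (by positivity) (one_sub_two_rpow_neg_pos hβ0).le
  rw [mul_assoc D, h2, h1] at hd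
  rw [hs]
  calc _ ≤ A * (K * s ^ β + D * (K ^ (1 / β) * s)) := hd
    _ ≤ A * (m * s ^ β + D * (m * (s ^ β * (n * τ) ^ (1 - β)))) := by
        gcongr
        · exact le_max_left _ _
        · exact le_max_right _ _
    _ = A * (1 + D * (n * τ) ^ (1 - β)) * m * s ^ β := by ring
    _ ≤ rkHolderConst c β θ (n * τ) * m * s ^ β := by
        unfold rkHolderConst
        gcongr
        exact le_add_of_nonneg_right hc.le

theorem norm_sub_le (h : IsRungeKuttaInterpolant V a b n τ X Y Z) (hτ : 0 < τ)
    (hK : 0 ≤ K) (hX : ∀ u v, 0 ≤ u → u ≤ v → v ≤ n * τ → ‖X v - X u‖ ≤ K * (v - u) ^ β)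
    (hV : StageSumBound V a b c) (hc : 0 < c) (hβ0 : 0 < β) (hβ1 : β ≤ 1) (hθ : 0 < θ)
    (h2θ : 2 + 2 * θ ≤ 2 ^ (2 * β)) {u v : ℝ} (hu : 0 ≤ u) (huv : u ≤ v) (hv : v ≤ n * τ) :
    ‖Y v - Y u‖ ≤ 3 * (rkHolderConst c β θ (n * τ) * max K (K ^ (1 / β))) * (v - u) ^ β := by
  have hcΓ : c ≤ rkHolderConst c β θ (n * τ) := le_rkHolderConst hc.le hβ0 hθ.le (by positivity)
  have hm : 0 ≤ max K (K ^ (1 / β)) := hK.trans (le_max_left _ _)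
  refine norm_sub_le_of_cell_of_grid hτ hβ0.le (mul_nonneg (hc.le.trans hcΓ) hm)
    (fun k hk u v hku huv hv => ?_)
    (fun k l hkl hl => h.norm_grid_sub_le hτ hK hX hV hc hβ0 hβ1 hθ h2θ hkl hl) hu huv hv
  have hkn : ((k : ℝ) + 1) * τ ≤ n * τ := by gcongr; exact_mod_cast hk
  rw [h.update k hk v (hku.trans huv) hv, h.update k hk u hku (huv.trans hv),
    add_sub_add_left_eq_sub, ← map_sub, sub_sub_sub_cancel_right]
  calc _ ≤ c * (K * (v - u) ^ β) := ((stageSum b V _).le_opNorm _).trans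
        (mul_le_mul (hV.norm_b_le _)
          (hX u v ((by positivity : (0 : ℝ) ≤ k * τ).trans hku) huv (hv.trans hkn))
          (norm_nonneg _) hc.le)
    _ ≤ _ := by
        rw [← mul_assoc]
        exact mul_le_mul_of_nonneg_right (mul_le_mul hcΓ (le_max_left _ _) hK (hc.le.trans hcΓ))
          (rpow_nonneg (sub_nonneg.2 huv) _)

theorem norm_stage_grid_sub_le (h : IsRungeKuttaInterpolant V a b n τ X Y Z) (hτ : 0 < τ)
    (hK : 0 ≤ K) (hX : ∀ u v, 0 ≤ u → u ≤ v → v ≤ n * τ → ‖X v - X u‖ ≤ K * (v - u) ^ β)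
    (hV : StageSumBound V a b c) {j : ℕ} (hj : j ≤ n) (i : ι) :
    ‖Z (j * τ) i - Y (max (j * τ - τ) 0)‖ ≤ c * (K * τ ^ β) := by
  rcases j with _ | j
  · have := hV.nonneg
    simp [h.stage_zero, hτ.le]
    positivity
  · have hmax : max ((j + 1 : ℕ) * τ - τ) 0 = j * τ := by
      push_cast
      rw [add_mul, one_mul, add_sub_cancel_right, max_eq_left (by positivity)]
    rw [hmax]
    push_cast
    exact h.norm_stage_succ_sub_le hτ hX hV (by omega) i

theorem norm_stage_sub_le (h : IsRungeKuttaInterpolant V a b n τ X Y Z) (hτ : 0 < τ)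
    (hβ : 0 ≤ β) (hK : 0 ≤ K)
    (hX : ∀ u v, 0 ≤ u → u ≤ v → v ≤ n * τ → ‖X v - X u‖ ≤ K * (v - u) ^ β)
    (hV : StageSumBound V a b c) {H : ℝ} (hH : 0 ≤ H)
    (hY : ∀ u v, 0 ≤ u → u ≤ v → v ≤ n * τ → ‖Y v - Y u‖ ≤ H * (v - u) ^ β) (i : ι) {u v : ℝ}
    (hu : 0 ≤ u) (huv : u ≤ v) (hv : v ≤ n * τ) :
    ‖Z v i - Z u i‖ ≤ 3 * (H + 2 * c * K) * (v - u) ^ β := by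
  have hc := hV.nonneg
  refine norm_sub_le_of_cell_of_grid (f := fun w => Z w i) hτ hβ (by positivity)
    (fun k hk u v hku huv hv => ?_)
    (fun k l hkl hl => ?_) hu huv hv
  · have hvn : v ≤ n * τ := hv.trans (by gcongr; exact_mod_cast hk)
    have hu0 : 0 ≤ u := (by positivity : (0 : ℝ) ≤ k * τ).trans hku
    have hσ₀ : 0 ≤ max (u - τ) 0 := le_max_right _ _
    have hσ₁ : max (u - τ) 0 ≤ max (v - τ) 0 := max_le_max (by linarith) le_rfl
    have hσ₂ : max (v - τ) 0 ≤ n * τ := max_le (by linarith) (by positivity)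
    have hσ := max_sub_sub_max_sub_le τ huv
    have hstep : ∀ (z : ι → E) {p q : ℝ}, 0 ≤ p → p ≤ q → q ≤ n * τ → q - p ≤ v - u →
        ‖stageSum (a i) V z (X q - X p)‖ ≤ c * K * (v - u) ^ β := fun z p q hp hpq hq hqp =>
      ((stageSum _ V z).le_opNorm _).trans <| by
        rw [mul_assoc]
        refine mul_le_mul (hV.norm_a_le i z) ((hX p q hp hpq hq).trans ?_) (norm_nonneg _) hc
        gcongr
    have hY' : ‖Y (max (v - τ) 0) - Y (max (u - τ) 0)‖ ≤ H * (v - u) ^ β :=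
      (hY _ _ hσ₀ hσ₁ hσ₂).trans (by gcongr)
    rw [h.stage_of_mem_Icc hτ hk hku (huv.trans hv) i,
      h.stage_of_mem_Icc hτ hk (hku.trans huv) hv i]
    calc _ = ‖(Y (max (v - τ) 0) - Y (max (u - τ) 0)) -
            stageSum (a i) V (Z (k * τ)) (X (max (v - τ) 0) - X (max (u - τ) 0)) +
            stageSum (a i) V (Z ((k + 1) * τ)) (X v - X u)‖ := by
          congr 1; simp only [map_sub]; abel
      _ ≤ H * (v - u) ^ β + c * K * (v - u) ^ β + c * K * (v - u) ^ β :=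
          norm_add_le_of_le (norm_sub_le_of_le hY' (hstep _ hσ₀ hσ₁ hσ₂ hσ))
            (hstep _ hu0 huv hvn le_rfl)
      _ = _ := by ring
  · rcases hkl.eq_or_lt with rfl | hlt
    · simp only [sub_self, norm_zero]; positivity
    have hτkl : τ ≤ l * τ - k * τ := by
      have : (k : ℝ) + 1 ≤ l := by exact_mod_cast hlt
      rw [← sub_mul]; exact le_mul_of_one_le_left hτ.le (by linarith)
    have hkn : (k : ℝ) * τ ≤ n * τ := by gcongr; exact_mod_cast hkl.trans hl
    have hln : (l : ℝ) * τ ≤ n * τ := by gcongr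
    have hkl' : (k : ℝ) * τ ≤ l * τ := by linarith
    have hσ₁ : max (k * τ - τ) 0 ≤ max (l * τ - τ) 0 := max_le_max (by linarith) le_rfl
    have hσ := max_sub_sub_max_sub_le τ hkl'
    have hY' : ‖Y (max (l * τ - τ) 0) - Y (max (k * τ - τ) 0)‖ ≤ H * (l * τ - k * τ) ^ β :=
      (hY _ _ (le_max_right _ _) hσ₁ (max_le (by linarith) (by positivity))).trans
        (by gcongr)
    have hτβ : c * (K * τ ^ β) ≤ c * K * (l * τ - k * τ) ^ β := by
      rw [mul_assoc]; gcongr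
    calc ‖Z (l * τ) i - Z (k * τ) i‖
        = ‖(Y (max (l * τ - τ) 0) - Y (max (k * τ - τ) 0)) +
            (Z (l * τ) i - Y (max (l * τ - τ) 0)) - (Z (k * τ) i - Y (max (k * τ - τ) 0))‖ := by
          congr 1; abel
      _ ≤ H * (l * τ - k * τ) ^ β + c * (K * τ ^ β) + c * (K * τ ^ β) :=
          norm_sub_le_of_le (norm_add_le_of_le hY' (h.norm_stage_grid_sub_le hτ hK hX hV hl i))
            (h.norm_stage_grid_sub_le hτ hK hX hV (hkl.trans hl) i)
      _ ≤ _ := by linarith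

theorem holderSemi_bounds (h : IsRungeKuttaInterpolant V a b n τ X Y Z) (hτ : 0 < τ)
    (hK : 0 ≤ K) (hX : ∀ u v, 0 ≤ u → u ≤ v → v ≤ n * τ → ‖X v - X u‖ ≤ K * (v - u) ^ β)
    (hV : StageSumBound V a b c) (hc : 0 < c) (hβ0 : 0 < β) (hβ1 : β ≤ 1) (hθ : 0 < θ)
    (h2θ : 2 + 2 * θ ≤ 2 ^ (2 * β)) :
    (∀ i, holderSemi (fun u => Z u i) 0 (n * τ) β ≤
      3 * (3 * rkHolderConst c β θ (n * τ) + 2 * c) * max K (K ^ (1 / β))) ∧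
    holderSemi Y 0 (n * τ) β ≤
      3 * (3 * rkHolderConst c β θ (n * τ) + 2 * c) * max K (K ^ (1 / β)) := by
  have hY := fun u v => h.norm_sub_le hτ hK hX hV hc hβ0 hβ1 hθ h2θ (u := u) (v := v)
  set Γ := rkHolderConst c β θ (n * τ)
  set μ := max K (K ^ (1 / β))
  have hΓ : 0 ≤ Γ := hc.le.trans (le_rkHolderConst hc.le hβ0 hθ.le (by positivity))
  have hμ : 0 ≤ μ := hK.trans (le_max_left _ _)
  have hKμ : K ≤ μ := le_max_left _ _
  refine ⟨fun i => holderSemi_le (by positivity) fun u v hu huv hv => ?_,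
    holderSemi_le (by positivity) fun u v hu huv hv => (hY u v hu huv.le hv).trans ?_⟩
  · refine (h.norm_stage_sub_le hτ hβ0.le hK hX hV (by positivity) hY i hu huv.le hv).trans ?_
    rw [show 3 * (3 * Γ + 2 * c) * μ = 3 * (3 * (Γ * μ) + 2 * c * μ) by ring]
    gcongr
  · have : 0 ≤ (v - u) ^ β := rpow_nonneg (sub_nonneg.2 huv.le) _
    nlinarith [mul_nonneg (mul_nonneg (add_nonneg hΓ hc.le) hμ) this]

theorem of_uniform_grid {T : ℝ} (hT : 0 ≤ T) {y : E} (hY0 : Y 0 = y) (hZ0 : ∀ i, Z 0 i = y)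
    (hYeq : ∀ k : ℕ, k < n → ∀ u : ℝ, (k : ℝ) * T / n ≤ u → u ≤ ((k : ℝ) + 1) * T / n →
      Y u = Y ((k : ℝ) * T / n) +
        ∑ i, b i • V (Z (((k : ℝ) + 1) * T / n) i) (X u - X ((k : ℝ) * T / n)))
    (hZeq : ∀ k : ℕ, 1 ≤ k → k < n → ∀ u : ℝ, (k : ℝ) * T / n < u → u ≤ ((k : ℝ) + 1) * T / n →
      ∀ i, Z u i = Y (u - T / n) +
        ∑ j, a i j • (V (Z ((k : ℝ) * T / n) j) (X ((k : ℝ) * T / n) - X (u - T / n)) +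
          V (Z (((k : ℝ) + 1) * T / n) j) (X u - X ((k : ℝ) * T / n))))
    (hZ1 : ∀ u : ℝ, 0 < u → u ≤ T / n → ∀ i,
      Z u i = y + ∑ j, a i j • V (Z (T / n) j) (X u - X 0)) :
    IsRungeKuttaInterpolant V a b n (T / n) X Y Z where
  update k hk u h₁ h₂ := by
    simp only [← mul_div_assoc, stageSum_apply] at h₁ h₂ ⊢
    exact hYeq k hk u h₁ h₂
  stage_zero i := (hZ0 i).trans hY0.symm
  stage k hk u h₁ h₂ i := by
    simp only [← mul_div_assoc] at h₁ h₂ ⊢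
    rcases k.eq_zero_or_pos with rfl | hk1
    · simp only [CharP.cast_eq_zero, zero_mul, zero_div, zero_add, one_mul] at h₁ h₂ ⊢
      rw [max_eq_right (by linarith), hZ1 u h₁ h₂ i, hY0, sub_self, map_zero, add_zero,
        stageSum_apply]
    · have hτk : T / n ≤ (k : ℝ) * T / n := by
        rw [mul_div_assoc]; exact le_mul_of_one_le_left (by positivity) (by exact_mod_cast hk1)
      rw [max_eq_left (by linarith), hZeq k hk1 hk u h₁ h₂ i, add_assoc, stageSum_apply,
        stageSum_apply, ← Finset.sum_add_distrib]
      simp only [smul_add]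

end IsRungeKuttaInterpolant

end RungeKutta

/-- **A priori Hölder bounds, uniform in `n`, for Runge–Kutta methods and their stage
values.** For the continuous version `Y^n` of an `S`-stage Runge–Kutta method with stage
values `Z = Y^n_{·,i}`, driven by a `β`-Hölder path `X` (`β ∈ (1/2,1)`) with
`V ∈ C¹_b(ℝ^m; ℝ^{m×d})`:
`∑_i ‖Y^n_{·,i}‖_β ≤ C max{‖X‖_β, ‖X‖_β^{1/β}}` and
`‖Y^n‖_β ≤ C max{‖X‖_β, ‖X‖_β^{1/β+1}}`, where `C` depends only on
`max{|a_{ij}|, |b_i|}`, `S`, `V`, `β`, `T`, not on `n`. -/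
theorem rungeKutta_apriori_holder_bounds
    (m d S : ℕ) (β T : ℝ) (hβ : β ∈ Set.Ioo (1/2 : ℝ) 1) (hT : 0 < T)
    (V : (Fin m → ℝ) → ((Fin d → ℝ) →L[ℝ] (Fin m → ℝ))) (Cv : ℝ)
    (hVdiff : Differentiable ℝ V)
    (hVb : ∀ y, ‖V y‖ ≤ Cv ∧ ‖fderiv ℝ V y‖ ≤ Cv) (cmax : ℝ) :
    ∃ C : ℝ, 0 < C ∧
      ∀ (a : Fin S → Fin S → ℝ) (b : Fin S → ℝ),
      (∀ i j, |a i j| ≤ cmax ∧ |b i| ≤ cmax) →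
      ∀ (n : ℕ), 0 < n →
      ∀ (X : ℝ → (Fin d → ℝ)) (Y : ℝ → (Fin m → ℝ)) (Z : ℝ → Fin S → (Fin m → ℝ))
        (y : Fin m → ℝ) (K : ℝ), 0 ≤ K →
      -- `X` is `β`-Hölder with constant `K`
      (∀ u v : ℝ, 0 ≤ u → u < v → v ≤ T → ‖X v - X u‖ ≤ K * (v - u) ^ β) →
      Y 0 = y → (∀ i, Z 0 i = y) →
      -- continuous version of the numerical solution:
      -- `Y^n_t = Y^n_{t_k} + ∑_i b_i V(Y^n_{t_{k+1},i})(X_t - X_{t_k})` for `t ∈ [t_k,t_{k+1}]`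
      (∀ k : ℕ, k < n → ∀ u : ℝ, (k : ℝ) * T / n ≤ u → u ≤ ((k : ℝ) + 1) * T / n →
        Y u = Y ((k : ℝ) * T / n) +
          ∑ i, b i • V (Z (((k : ℝ) + 1) * T / n) i) (X u - X ((k : ℝ) * T / n))) →
      -- continuous version of the stage values, `t ∈ (t_k, t_{k+1}]`, `k ≥ 1`:
      (∀ k : ℕ, 1 ≤ k → k < n → ∀ u : ℝ, (k : ℝ) * T / n < u → u ≤ ((k : ℝ) + 1) * T / n →
        ∀ i, Z u i = Y (u - T / n) +
          ∑ j, a i j • (V (Z ((k : ℝ) * T / n) j) (X ((k : ℝ) * T / n) - X (u - T / n)) +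
            V (Z (((k : ℝ) + 1) * T / n) j) (X u - X ((k : ℝ) * T / n)))) →
      -- stage values on the first cell `(0, t_1]`:
      (∀ u : ℝ, 0 < u → u ≤ T / n → ∀ i,
        Z u i = y + ∑ j, a i j • V (Z (T / n) j) (X u - X 0)) →
      ((∑ i, holderSemi (fun u => Z u i) 0 T β) ≤ C * max K (K ^ (1 / β)) ∧
        holderSemi Y 0 T β ≤ C * max K (K ^ (1 / β + 1))) := by
  obtain ⟨hβ1, hβ2⟩ := hβ
  have hβ0 : 0 < β := by linarith
  obtain ⟨θ, hθ, h2θ⟩ := exists_sewing_threshold hβ1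
  have hCv : 0 ≤ Cv := (norm_nonneg _).trans (hVb 0).1
  set c : ℝ := S * |cmax| * Cv + 1
  have hc : 0 < c := by positivity
  have hcS : (Fintype.card (Fin S) : ℝ) * cmax * Cv ≤ c := by
    have : (S : ℝ) * cmax * Cv ≤ S * |cmax| * Cv := by gcongr; exact le_abs_self cmax
    rw [Fintype.card_fin]; linarith
  set H := 3 * (3 * rkHolderConst c β θ T + 2 * c)
  have hH : 0 < H := by have := hc.trans_le (le_rkHolderConst hc.le hβ0 hθ.le hT.le); positivity
  refine ⟨(S + 1) * H, by positivity, ?_⟩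
  intro a b hab n hn X Y Z y K hK hX hY0 hZ0 hYeq hZeq hZ1
  have hnτ : (n : ℝ) * (T / n) = T := mul_div_cancel₀ T (by positivity)
  have hX' : ∀ u v, 0 ≤ u → u ≤ v → v ≤ n * (T / n) → ‖X v - X u‖ ≤ K * (v - u) ^ β := by
    rw [hnτ]; exact norm_sub_le_mul_rpow_of_lt hβ0.ne' hX
  obtain ⟨hZH, hYH⟩ := (IsRungeKuttaInterpolant.of_uniform_grid hT.le hY0 hZ0 hYeq hZeq hZ1)
    |>.holderSemi_bounds (by positivity) hK hX' (.of_abs_le hab hVdiff hVb hcS) hc hβ0 hβ2.le hθ h2θ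
  rw [hnτ] at hZH hYH
  have hμ : 0 ≤ H * max K (K ^ (1 / β)) := mul_nonneg hH.le (hK.trans (le_max_left _ _))
  constructor
  · calc ∑ i, holderSemi (fun u => Z u i) 0 T β ≤ ∑ _i : Fin S, H * max K (K ^ (1 / β)) :=
          Finset.sum_le_sum fun i _ => hZH i
      _ ≤ (S + 1) * H * max K (K ^ (1 / β)) := by
          rw [Finset.sum_const, Finset.card_univ, Fintype.card_fin, nsmul_eq_mul]; nlinarith
  · calc holderSemi Y 0 T β ≤ H * max K (K ^ (1 / β)) := hYH
      _ ≤ H * max K (K ^ (1 / β + 1)) :=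
          mul_le_mul_of_nonneg_left (max_rpow_one_div_le hK hβ0 hβ2.le) hH.le
      _ ≤ (S + 1) * H * max K (K ^ (1 / β + 1)) := by
          refine mul_le_mul_of_nonneg_right (le_mul_of_one_le_left hH.le ?_)
            (hK.trans (le_max_left _ _))
          linarith [(Nat.cast_nonneg S : (0 : ℝ) ≤ S)]
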